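/- arXiv:1206.0463 — 4 statements merged into one kernel-verified Lean document; each statement's English description precedes it below -/
import Mathlib

section
/- Let (M, ρ, μ) be a doubling metric measure space with exponent d. If σ > d, then for all x, y ∈ M and δ > 0: ∫_M (1+ρ(x,u)/δ)^{-σ} (1+ρ(y,u)/δ)^{-σ} dμ(u) ≤ 2^σ (2^{-d} − 2^{-σ})^{-1} (μ(B(x,δ)) + μ(B(y,δ))) (1 + ρ(x,y)/δ)^{-σ}. -/
/-!
Write `a = 1 + ρ(x,u)/δ`, `b = 1 + ρ(y,u)/δ`, `c = 1 + ρ(x,y)/δ`. The triangle inequality gives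
`c ≤ a + b`, so `max a b ≥ c/2` and `(ab)^{-σ} ≤ 2^σ c^{-σ} (a^{-σ} + b^{-σ})`. This reduces the
claim to a single peak, `∫ (1 + ρ(x,u)/δ)^{-σ} dμ(u) ≤ (2^{-d} - 2^{-σ})^{-1} μ(B(x,δ))`: if
`2^k ≤ 1 + ρ(x,u)/δ < 2^{k+1}` then the integrand is at most `2^{-kσ}` and `u ∈ B(x, 2^{k+1}δ)`,
a ball of measure at most `2^{(k+1)d} μ(B(x,δ))` by doubling, and
`∑ₖ 2^{-kσ} 2^{(k+1)d} = 2^d / (1 - 2^{d-σ}) = (2^{-d} - 2^{-σ})^{-1}` since `d < σ`.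
-/

open MeasureTheory Metric ENNReal

namespace Real

theorem rpow_neg_mul_rpow_neg_le_of_le_add {a b c σ : ℝ} (ha : 0 < a) (hb : 0 < b) (hc : 0 < c)
    (hcab : c ≤ a + b) (hσ : 0 ≤ σ) :
    a ^ (-σ) * b ^ (-σ) ≤ 2 ^ σ * c ^ (-σ) * (a ^ (-σ) + b ^ (-σ)) := by
  wlog hab : a ≤ b generalizing a b
  · rw [mul_comm, add_comm]
    exact this hb ha (by linarith) (le_of_not_ge hab)
  have hb_le : b ^ (-σ) ≤ 2 ^ σ * c ^ (-σ) :=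
    calc b ^ (-σ) ≤ (c / 2) ^ (-σ) :=
          rpow_le_rpow_of_nonpos (by positivity) (by linarith) (by linarith)
      _ = 2 ^ σ * c ^ (-σ) := by
        rw [div_rpow hc.le zero_le_two, rpow_neg zero_le_two, div_inv_eq_mul, mul_comm]
  have ha_pos : 0 < a ^ (-σ) := rpow_pos_of_pos ha _
  have hb_pos : 0 < b ^ (-σ) := rpow_pos_of_pos hb _
  calc a ^ (-σ) * b ^ (-σ) ≤ 2 ^ σ * c ^ (-σ) * a ^ (-σ) := by nlinarith
    _ ≤ 2 ^ σ * c ^ (-σ) * (a ^ (-σ) + b ^ (-σ)) := by gcongr; linarith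

end Real

theorem one_add_dist_div_rpow_neg_mul_le {M : Type*} [PseudoMetricSpace M] {δ σ : ℝ}
    (hδ : 0 < δ) (hσ : 0 ≤ σ) (x y u : M) :
    (1 + dist x u / δ) ^ (-σ) * (1 + dist y u / δ) ^ (-σ) ≤
      2 ^ σ * (1 + dist x y / δ) ^ (-σ) *
        ((1 + dist x u / δ) ^ (-σ) + (1 + dist y u / δ) ^ (-σ)) := by
  have htri : dist x y / δ ≤ dist x u / δ + dist y u / δ := by
    rw [← add_div]; gcongr; exact dist_triangle_right x y u
  exact Real.rpow_neg_mul_rpow_neg_le_of_le_add (by positivity) (by positivity) (by positivity)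
    (by linarith) hσ

theorem tsum_two_rpow_neg_pow_mul_two_rpow_pow_succ {d σ : ℝ} (h : d < σ) :
    ∑' k : ℕ, ENNReal.ofReal (2 ^ (-σ)) ^ k * ENNReal.ofReal (2 ^ d) ^ (k + 1) =
      ENNReal.ofReal ((2 ^ (-d) - 2 ^ (-σ))⁻¹) := by
  have hratio :
      ENNReal.ofReal (2 ^ (-σ)) * ENNReal.ofReal (2 ^ d) = ENNReal.ofReal (2 ^ (d - σ)) := by
    rw [← ofReal_mul (by positivity), ← Real.rpow_add two_pos, neg_add_eq_sub]
  have hlt : (2 : ℝ) ^ (d - σ) < 1 := Real.rpow_lt_one_of_one_lt_of_neg one_lt_two (by linarith)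
  simp_rw [pow_succ', mul_left_comm, ← mul_pow, hratio]
  rw [ENNReal.tsum_mul_left, ENNReal.tsum_geometric, ← ofReal_one, ← ofReal_sub _ (by positivity),
    ← ofReal_inv_of_pos (by linarith), ← ofReal_mul (by positivity)]
  congr 1
  rw [Real.rpow_sub two_pos, Real.rpow_neg zero_le_two, Real.rpow_neg zero_le_two]
  field_simp

theorem ofReal_one_add_dist_div_rpow_neg_le_tsum {M : Type*} [PseudoMetricSpace M] {δ σ : ℝ}
    (hδ : 0 < δ) (hσ : 0 ≤ σ) (x u : M) :
    ENNReal.ofReal ((1 + dist x u / δ) ^ (-σ)) ≤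
      ∑' k : ℕ, (ball x (2 ^ (k + 1) * δ)).indicator (fun _ ↦ ENNReal.ofReal (2 ^ (-σ)) ^ k) u := by
  have hs : 1 ≤ 1 + dist x u / δ := by simp only [le_add_iff_nonneg_right]; positivity
  obtain ⟨k, hk_le, hk_lt⟩ := exists_nat_pow_near hs one_lt_two
  have hu : u ∈ ball x (2 ^ (k + 1) * δ) := by
    rw [mem_ball, dist_comm, ← div_lt_iff₀ hδ]; linarith
  calc ENNReal.ofReal ((1 + dist x u / δ) ^ (-σ)) ≤ ENNReal.ofReal ((2 ^ (-σ)) ^ k) := by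
        rw [Real.rpow_pow_comm zero_le_two]
        exact ofReal_le_ofReal (Real.rpow_le_rpow_of_nonpos (by positivity) hk_le (by linarith))
    _ = (ball x (2 ^ (k + 1) * δ)).indicator (fun _ ↦ ENNReal.ofReal (2 ^ (-σ)) ^ k) u := by
        rw [Set.indicator_of_mem hu, ofReal_pow (by positivity)]
    _ ≤ _ := ENNReal.le_tsum k

section Doubling

variable {M : Type*} [PseudoMetricSpace M] [MeasurableSpace M] {μ : Measure M}

theorem measure_ball_two_pow_mul_le {D : ℝ≥0∞}
    (hdoub : ∀ (x : M) (r : ℝ), 0 < r → μ (ball x (2 * r)) ≤ D * μ (ball x r))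
    (x : M) {δ : ℝ} (hδ : 0 < δ) (n : ℕ) :
    μ (ball x (2 ^ n * δ)) ≤ D ^ n * μ (ball x δ) := by
  induction n with
  | zero => simp
  | succ n ih =>
    calc μ (ball x (2 ^ (n + 1) * δ)) = μ (ball x (2 * (2 ^ n * δ))) := by ring_nf
      _ ≤ D * μ (ball x (2 ^ n * δ)) := hdoub x _ (by positivity)
      _ ≤ D * (D ^ n * μ (ball x δ)) := by gcongr
      _ = D ^ (n + 1) * μ (ball x δ) := by ring

theorem lintegral_one_add_dist_div_rpow_neg_le [OpensMeasurableSpace M] {d δ σ : ℝ}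
    (hdoub : ∀ (x : M) (r : ℝ), 0 < r →
      μ (ball x (2 * r)) ≤ ENNReal.ofReal ((2 : ℝ) ^ d) * μ (ball x r))
    (hδ : 0 < δ) (hσ : 0 ≤ σ) (hdσ : d < σ) (x : M) :
    ∫⁻ u, ENNReal.ofReal ((1 + dist x u / δ) ^ (-σ)) ∂μ ≤
      ENNReal.ofReal ((2 ^ (-d) - 2 ^ (-σ))⁻¹) * μ (ball x δ) := by
  calc ∫⁻ u, ENNReal.ofReal ((1 + dist x u / δ) ^ (-σ)) ∂μ
      ≤ ∫⁻ u, ∑' k : ℕ,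
          (ball x (2 ^ (k + 1) * δ)).indicator (fun _ ↦ ENNReal.ofReal (2 ^ (-σ)) ^ k) u ∂μ :=
        lintegral_mono fun u ↦ ofReal_one_add_dist_div_rpow_neg_le_tsum hδ hσ x u
    _ = ∑' k : ℕ, ENNReal.ofReal (2 ^ (-σ)) ^ k * μ (ball x (2 ^ (k + 1) * δ)) := by
        rw [lintegral_tsum fun k ↦ (measurable_const.indicator measurableSet_ball).aemeasurable]
        simp_rw [lintegral_indicator_const measurableSet_ball]
    _ ≤ ∑' k : ℕ,
          ENNReal.ofReal (2 ^ (-σ)) ^ k * (ENNReal.ofReal (2 ^ d) ^ (k + 1) * μ (ball x δ)) :=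
        ENNReal.tsum_le_tsum fun k ↦ by gcongr; exact measure_ball_two_pow_mul_le hdoub x hδ _
    _ = ENNReal.ofReal ((2 ^ (-d) - 2 ^ (-σ))⁻¹) * μ (ball x δ) := by
        simp_rw [← mul_assoc]
        rw [ENNReal.tsum_mul_right, tsum_two_rpow_neg_pow_mul_two_rpow_pow_succ hdσ]

end Doubling

theorem lintegral_two_peaks_general {M : Type*} [MetricSpace M] [MeasurableSpace M]
    [OpensMeasurableSpace M]
    (μ : Measure M) (d : ℝ) (hd : 0 < d)
    (hdoub : ∀ (x : M) (r : ℝ), 0 < r →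
      μ (ball x (2 * r)) ≤ ENNReal.ofReal ((2 : ℝ) ^ d) * μ (ball x r))
    (σ δ : ℝ) (hσ : d < σ) (hδ : 0 < δ) (x y : M) :
    ∫⁻ u, ENNReal.ofReal ((1 + dist x u / δ) ^ (-σ) * (1 + dist y u / δ) ^ (-σ)) ∂μ
      ≤ ENNReal.ofReal ((2 : ℝ) ^ σ * ((2 : ℝ) ^ (-d) - (2 : ℝ) ^ (-σ))⁻¹)
          * (μ (ball x δ) + μ (ball y δ))
          * ENNReal.ofReal ((1 + dist x y / δ) ^ (-σ)) := by
  have hσ0 : 0 ≤ σ := by linarith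
  have hmeas (z : M) : Measurable fun u ↦ ENNReal.ofReal ((1 + dist z u / δ) ^ (-σ)) := by
    fun_prop
  let C := ENNReal.ofReal ((2 ^ (-d) - 2 ^ (-σ))⁻¹)
  let K := ENNReal.ofReal (2 ^ σ * (1 + dist x y / δ) ^ (-σ))
  calc ∫⁻ u, ENNReal.ofReal ((1 + dist x u / δ) ^ (-σ) * (1 + dist y u / δ) ^ (-σ)) ∂μ
      ≤ ∫⁻ u, K * (ENNReal.ofReal ((1 + dist x u / δ) ^ (-σ)) +
          ENNReal.ofReal ((1 + dist y u / δ) ^ (-σ))) ∂μ := lintegral_mono fun u ↦ by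
        rw [← ofReal_add (by positivity) (by positivity), ← ofReal_mul (by positivity)]
        exact ofReal_le_ofReal (one_add_dist_div_rpow_neg_mul_le hδ hσ0 x y u)
    _ = K * (∫⁻ u, ENNReal.ofReal ((1 + dist x u / δ) ^ (-σ)) ∂μ +
          ∫⁻ u, ENNReal.ofReal ((1 + dist y u / δ) ^ (-σ)) ∂μ) := by
        rw [lintegral_const_mul' _ _ ofReal_ne_top, lintegral_add_left (hmeas x)]
    _ ≤ K * (C * μ (ball x δ) + C * μ (ball y δ)) := by
        gcongr <;> exact lintegral_one_add_dist_div_rpow_neg_le hdoub hδ hσ0 hσ _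
    _ = _ := by
        simp only [K, C, ← mul_add, ofReal_mul (Real.rpow_nonneg zero_le_two σ)]
        ring

theorem lintegral_two_peaks {M : Type*} [MetricSpace M] [MeasurableSpace M]
    [OpensMeasurableSpace M]
    (μ : Measure M) (d : ℝ) (hd : 0 < d)
    (hpos : ∀ (x : M) (r : ℝ), 0 < r → 0 < μ (ball x r))
    (hfin : ∀ (x : M) (r : ℝ), 0 < r → μ (ball x r) < ⊤)
    (hdoub : ∀ (x : M) (r : ℝ), 0 < r →
      μ (ball x (2 * r)) ≤ ENNReal.ofReal ((2 : ℝ) ^ d) * μ (ball x r))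
    (σ δ : ℝ) (hσ : d < σ) (hδ : 0 < δ) (x y : M) :
    ∫⁻ u, ENNReal.ofReal ((1 + dist x u / δ) ^ (-σ) * (1 + dist y u / δ) ^ (-σ)) ∂μ
      ≤ ENNReal.ofReal ((2 : ℝ) ^ σ * ((2 : ℝ) ^ (-d) - (2 : ℝ) ^ (-σ))⁻¹)
          * (μ (ball x δ) + μ (ball y δ))
          * ENNReal.ofReal ((1 + dist x y / δ) ^ (-σ)) :=
  lintegral_two_peaks_general μ d hd hdoub σ δ hσ hδ x y
end

section
/- Let (M, ρ, μ) be a doubling metric measure space with exponent d and define D_{δ,σ}(x,y) := (μ(B(x,δ))μ(B(y,δ)))^{-1/2}(1+ρ(x,y)/δ)^{-σ}. If 0 < p < ∞ and σ > d(1/2 + 1/p), then for all x ∈ M and δ > 0: (∫_M D_{δ,σ}(x,y)^p dμ(y))^{1/p} ≤ c(p) μ(B(x,δ))^{1/p − 1}, where c(p) = (2^{dp/2}/(2^{-d} − 2^{-(σ−d/2)p}))^{1/p}. -/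
/-!
Doubling gives `μ(B(x,δ)) ≤ (2(1 + ρ(x,y)/δ))^d μ(B(y,δ))`, which bounds `D_{δ,σ}(x,y)^p` by
`2^{dp/2} μ(B(x,δ))^{-p} (1 + ρ(x,y)/δ)^{-τ}` with `τ = (σ - d/2)p > d`.
The weight `(1 + ρ(x,y)/δ)^{-τ}` is dominated by `∑_j 2^{-jτ} 1_{B(x, 2^{j+1}δ)}(y)`,
and `j + 1` doublings give
`∫ (1 + ρ/δ)^{-τ} dμ ≤ ∑_j 2^{-jτ} 2^{(j+1)d} μ(B(x,δ)) = μ(B(x,δ)) / (2^{-d} - 2^{-τ})`.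
-/

open MeasureTheory Metric
open scoped ENNReal NNReal

/-- The localization kernel `D_{δ,σ}(x,y)`. -/
noncomputable def Dker {M : Type*} [MetricSpace M] [MeasurableSpace M]
    (μ : Measure M) (δ σ : ℝ) (x y : M) : ℝ≥0∞ :=
  (μ (ball x δ) * μ (ball y δ)) ^ (-(1 / 2 : ℝ)) *
    ENNReal.ofReal ((1 + dist x y / δ) ^ (-σ))

theorem ofReal_one_add_dist_div_rpow_neg_le_tsum_indicator {M : Type*} [MetricSpace M] (x y : M)
    {δ τ : ℝ} (hδ : 0 < δ) (hτ : 0 ≤ τ) :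
    ENNReal.ofReal ((1 + dist x y / δ) ^ (-τ)) ≤
      ∑' j : ℕ, (ball x (2 ^ (j + 1) * δ)).indicator
        (fun _ ↦ ENNReal.ofReal ((2 : ℝ) ^ (-τ)) ^ j) y := by
  obtain ⟨n, hn, hsn⟩ :=
    exists_nat_pow_near (le_add_of_nonneg_right (by positivity : 0 ≤ dist x y / δ)) one_lt_two
  have hy : y ∈ ball x (2 ^ (n + 1) * δ) := by
    rw [mem_ball, dist_comm, ← div_lt_iff₀ hδ]
    linarith
  refine le_trans ?_ (ENNReal.le_tsum n)
  rw [Set.indicator_of_mem hy, ← ENNReal.ofReal_pow (by positivity), ← Real.rpow_natCast,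
    ← Real.rpow_mul zero_le_two, mul_comm, Real.rpow_mul zero_le_two, Real.rpow_natCast]
  exact ENNReal.ofReal_le_ofReal (Real.rpow_le_rpow_of_nonpos (by positivity) hn (by linarith))

theorem ofReal_two_rpow_mul_inv_one_sub_eq {d τ : ℝ} (hdτ : d < τ) :
    ENNReal.ofReal ((2 : ℝ) ^ d) *
        (1 - ENNReal.ofReal ((2 : ℝ) ^ (-τ)) * ENNReal.ofReal ((2 : ℝ) ^ d))⁻¹ =
      ENNReal.ofReal ((2 ^ (-d) - 2 ^ (-τ))⁻¹) := by
  have hmul : (2 : ℝ) ^ (-τ) * 2 ^ d < 1 := by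
    rw [← Real.rpow_add two_pos]
    exact Real.rpow_lt_one_of_one_lt_of_neg one_lt_two (by linarith)
  rw [← ENNReal.ofReal_mul (by positivity), ← ENNReal.ofReal_one,
    ← ENNReal.ofReal_sub _ (by positivity), ← ENNReal.ofReal_inv_of_pos (by linarith),
    ← ENNReal.ofReal_mul (by positivity), Real.rpow_neg zero_le_two d]
  congr 1
  field_simp

theorem ENNReal.mul_rpow_neg_le_of_le_mul {a b K : ℝ≥0∞} {s : ℝ} (h : a ≤ K * b) (hK₀ : K ≠ 0)
    (hK : K ≠ ⊤) (hs : 0 ≤ s) : (a * b) ^ (-s) ≤ K ^ s * a ^ (-(2 * s)) := by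
  have hKs₀ : K ^ s ≠ 0 := (ENNReal.rpow_pos (pos_iff_ne_zero.2 hK₀) hK).ne'
  have hKs : K ^ s ≠ ⊤ := ENNReal.rpow_ne_top_of_nonneg hs hK
  have hsq : a * a ≤ K * (a * b) :=
    calc a * a ≤ a * (K * b) := by gcongr
      _ = K * (a * b) := by ring
  calc (a * b) ^ (-s) = K ^ s * ((K ^ s)⁻¹ * ((a * b) ^ s)⁻¹) := by
        rw [← mul_assoc, ENNReal.mul_inv_cancel hKs₀ hKs, one_mul, ENNReal.rpow_neg]
    _ = K ^ s * ((K * (a * b)) ^ s)⁻¹ := by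
        rw [ENNReal.mul_rpow_of_nonneg K _ hs, ENNReal.mul_inv (.inl hKs₀) (.inl hKs)]
    _ ≤ K ^ s * ((a * a) ^ s)⁻¹ := by gcongr
    _ = K ^ s * a ^ (-(2 * s)) := by
        rw [ENNReal.rpow_neg, ENNReal.rpow_mul, ENNReal.rpow_two, pow_two]

def IsDoublingOfExponent {M : Type*} [MetricSpace M] [MeasurableSpace M]
    (μ : Measure M) (d : ℝ) : Prop :=
  ∀ (x : M) (r : ℝ), 0 < r → μ (ball x (2 * r)) ≤ ENNReal.ofReal ((2 : ℝ) ^ d) * μ (ball x r)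

namespace IsDoublingOfExponent

variable {M : Type*} [MetricSpace M] [MeasurableSpace M] {μ : Measure M} {d : ℝ}

theorem measure_ball_two_pow_mul_le (hμ : IsDoublingOfExponent μ d) (k : ℕ) (x : M)
    {r : ℝ} (hr : 0 < r) :
    μ (ball x (2 ^ k * r)) ≤ ENNReal.ofReal ((2 : ℝ) ^ d) ^ k * μ (ball x r) := by
  induction k with
  | zero => simp
  | succ k ih =>
    calc μ (ball x (2 ^ (k + 1) * r)) = μ (ball x (2 * (2 ^ k * r))) := by rw [pow_succ']; ring_nf
      _ ≤ ENNReal.ofReal ((2 : ℝ) ^ d) * μ (ball x (2 ^ k * r)) := hμ x _ (by positivity)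
      _ ≤ ENNReal.ofReal ((2 : ℝ) ^ d) * (ENNReal.ofReal ((2 : ℝ) ^ d) ^ k * μ (ball x r)) := by
        gcongr
      _ = ENNReal.ofReal ((2 : ℝ) ^ d) ^ (k + 1) * μ (ball x r) := by ring

theorem measure_ball_mul_le (hμ : IsDoublingOfExponent μ d) (hd : 0 ≤ d) (x : M)
    {s r : ℝ} (hs : 1 ≤ s) (hr : 0 < r) :
    μ (ball x (s * r)) ≤ ENNReal.ofReal ((2 * s) ^ d) * μ (ball x r) := by
  obtain ⟨n, hn, hsn⟩ := exists_nat_pow_near hs one_lt_two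
  have h2n : (2 : ℝ) ^ (n + 1) ≤ 2 * s := by rw [pow_succ']; gcongr
  calc μ (ball x (s * r)) ≤ μ (ball x (2 ^ (n + 1) * r)) := by gcongr
    _ ≤ ENNReal.ofReal ((2 : ℝ) ^ d) ^ (n + 1) * μ (ball x r) :=
      hμ.measure_ball_two_pow_mul_le _ x hr
    _ = ENNReal.ofReal (((2 : ℝ) ^ (n + 1)) ^ d) * μ (ball x r) := by
      rw [← ENNReal.ofReal_pow (by positivity), ← Real.rpow_natCast, ← Real.rpow_natCast,
        ← Real.rpow_mul zero_le_two, ← Real.rpow_mul zero_le_two, mul_comm d]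
    _ ≤ ENNReal.ofReal ((2 * s) ^ d) * μ (ball x r) := by gcongr

theorem measure_ball_le_of_dist (hμ : IsDoublingOfExponent μ d) (hd : 0 ≤ d) (x y : M)
    {δ : ℝ} (hδ : 0 < δ) :
    μ (ball x δ) ≤ ENNReal.ofReal ((2 * (1 + dist x y / δ)) ^ d) * μ (ball y δ) := by
  have hsub : ball x δ ⊆ ball y ((1 + dist x y / δ) * δ) := by
    rw [add_mul, one_mul, div_mul_cancel₀ _ hδ.ne']
    exact ball_subset_ball' le_rfl
  exact (measure_mono hsub).trans
    (hμ.measure_ball_mul_le hd y (le_add_of_nonneg_right (by positivity)) hδ)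

theorem lintegral_one_add_dist_div_rpow_neg_le [OpensMeasurableSpace M]
    (hμ : IsDoublingOfExponent μ d) (x : M) {δ τ : ℝ} (hδ : 0 < δ) (hdτ : d < τ) (hτ : 0 ≤ τ) :
    ∫⁻ y, ENNReal.ofReal ((1 + dist x y / δ) ^ (-τ)) ∂μ ≤
      ENNReal.ofReal ((2 ^ (-d) - 2 ^ (-τ))⁻¹) * μ (ball x δ) := by
  set q := ENNReal.ofReal ((2 : ℝ) ^ (-τ))
  set C := ENNReal.ofReal ((2 : ℝ) ^ d)
  calc ∫⁻ y, ENNReal.ofReal ((1 + dist x y / δ) ^ (-τ)) ∂μ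
      ≤ ∫⁻ y, ∑' j : ℕ, (ball x (2 ^ (j + 1) * δ)).indicator (fun _ ↦ q ^ j) y ∂μ :=
        lintegral_mono fun y ↦ ofReal_one_add_dist_div_rpow_neg_le_tsum_indicator x y hδ hτ
    _ = ∑' j : ℕ, q ^ j * μ (ball x (2 ^ (j + 1) * δ)) := by
        rw [lintegral_tsum fun j ↦ (measurable_const.indicator measurableSet_ball).aemeasurable]
        simp only [lintegral_indicator_const measurableSet_ball]
    _ ≤ ∑' j : ℕ, q ^ j * (C ^ (j + 1) * μ (ball x δ)) := by
        gcongr with j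
        exact hμ.measure_ball_two_pow_mul_le _ x hδ
    _ = C * (∑' j : ℕ, (q * C) ^ j) * μ (ball x δ) := by
        rw [← ENNReal.tsum_mul_left, ← ENNReal.tsum_mul_right]
        congr 1 with j
        ring
    _ = ENNReal.ofReal ((2 ^ (-d) - 2 ^ (-τ))⁻¹) * μ (ball x δ) := by
        rw [ENNReal.tsum_geometric, ofReal_two_rpow_mul_inv_one_sub_eq hdτ]

theorem Dker_rpow_le (hμ : IsDoublingOfExponent μ d) (hd : 0 ≤ d) (x y : M) {δ σ p : ℝ}
    (hδ : 0 < δ) (hp : 0 ≤ p) :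
    Dker μ δ σ x y ^ p ≤ ENNReal.ofReal ((2 : ℝ) ^ (d * p / 2)) * μ (ball x δ) ^ (-p) *
      ENNReal.ofReal ((1 + dist x y / δ) ^ (-((σ - d / 2) * p))) := by
  set t := 1 + dist x y / δ
  have ht : 0 < t := by positivity
  have hball := hμ.measure_ball_le_of_dist hd x y hδ
  calc Dker μ δ σ x y ^ p
      = (μ (ball x δ) * μ (ball y δ)) ^ (-(p / 2)) * ENNReal.ofReal (t ^ (-(σ * p))) := by
        rw [Dker, ENNReal.mul_rpow_of_nonneg _ _ hp, ← ENNReal.rpow_mul,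
          ENNReal.ofReal_rpow_of_nonneg (by positivity) hp, ← Real.rpow_mul ht.le]
        ring_nf
    _ ≤ ENNReal.ofReal ((2 * t) ^ d) ^ (p / 2) * μ (ball x δ) ^ (-(2 * (p / 2))) *
          ENNReal.ofReal (t ^ (-(σ * p))) := by
        gcongr
        exact ENNReal.mul_rpow_neg_le_of_le_mul hball (by simp; positivity) ENNReal.ofReal_ne_top
          (by positivity)
    _ = ENNReal.ofReal ((2 : ℝ) ^ (d * p / 2)) * μ (ball x δ) ^ (-p) *
          ENNReal.ofReal (t ^ (-((σ - d / 2) * p))) := by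
        have htpow : ENNReal.ofReal ((2 * t) ^ d) ^ (p / 2) * ENNReal.ofReal (t ^ (-(σ * p))) =
            ENNReal.ofReal ((2 : ℝ) ^ (d * p / 2)) * ENNReal.ofReal (t ^ (-((σ - d / 2) * p))) := by
          rw [ENNReal.ofReal_rpow_of_nonneg (by positivity) (by positivity),
            ← Real.rpow_mul (by positivity), Real.mul_rpow zero_le_two ht.le,
            ← ENNReal.ofReal_mul (by positivity), ← ENNReal.ofReal_mul (by positivity), mul_assoc,
            ← Real.rpow_add ht]
          ring_nf
        rw [show 2 * (p / 2) = p by ring, mul_right_comm, htpow, mul_right_comm]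

theorem lintegral_Dker_rpow_le [OpensMeasurableSpace M] (hμ : IsDoublingOfExponent μ d)
    (hd : 0 ≤ d) (x : M) {δ σ p : ℝ} (hδ : 0 < δ) (hp : 0 ≤ p) (hτ : d < (σ - d / 2) * p)
    (ha₀ : μ (ball x δ) ≠ 0) (ha : μ (ball x δ) ≠ ⊤) :
    ∫⁻ y, Dker μ δ σ x y ^ p ∂μ ≤
      ENNReal.ofReal ((2 : ℝ) ^ (d * p / 2) * (2 ^ (-d) - 2 ^ (-((σ - d / 2) * p)))⁻¹) *
        μ (ball x δ) ^ (1 - p) := by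
  set a := μ (ball x δ)
  have hpow : a ^ (-p) * a = a ^ (1 - p) := by
    rw [sub_eq_neg_add, ENNReal.rpow_add _ _ ha₀ ha, ENNReal.rpow_one]
  have hneg : a ^ (-p) ≠ ⊤ := by
    rw [ENNReal.rpow_neg]
    exact ENNReal.inv_ne_top.2 (ENNReal.rpow_pos (pos_iff_ne_zero.2 ha₀) ha).ne'
  calc ∫⁻ y, Dker μ δ σ x y ^ p ∂μ
      ≤ ∫⁻ y, ENNReal.ofReal ((2 : ℝ) ^ (d * p / 2)) * a ^ (-p) *
          ENNReal.ofReal ((1 + dist x y / δ) ^ (-((σ - d / 2) * p))) ∂μ :=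
        lintegral_mono fun y ↦ hμ.Dker_rpow_le hd x y hδ hp
    _ = ENNReal.ofReal ((2 : ℝ) ^ (d * p / 2)) * a ^ (-p) *
          ∫⁻ y, ENNReal.ofReal ((1 + dist x y / δ) ^ (-((σ - d / 2) * p))) ∂μ :=
        lintegral_const_mul' _ _ (ENNReal.mul_ne_top ENNReal.ofReal_ne_top hneg)
    _ ≤ ENNReal.ofReal ((2 : ℝ) ^ (d * p / 2)) * a ^ (-p) *
          (ENNReal.ofReal ((2 ^ (-d) - 2 ^ (-((σ - d / 2) * p)))⁻¹) * a) := by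
        gcongr
        exact hμ.lintegral_one_add_dist_div_rpow_neg_le x hδ hτ (by linarith)
    _ = _ := by rw [mul_mul_mul_comm, ← ENNReal.ofReal_mul (by positivity), hpow]

end IsDoublingOfExponent

theorem Dker_Lp_norm {M : Type*} [MetricSpace M] [MeasurableSpace M]
    [OpensMeasurableSpace M]
    (μ : Measure M) (d : ℝ) (hd : 0 < d)
    (hpos : ∀ (x : M) (r : ℝ), 0 < r → 0 < μ (ball x r))
    (hfin : ∀ (x : M) (r : ℝ), 0 < r → μ (ball x r) < ⊤)
    (hdoub : ∀ (x : M) (r : ℝ), 0 < r →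
      μ (ball x (2 * r)) ≤ ENNReal.ofReal ((2 : ℝ) ^ d) * μ (ball x r))
    (p σ δ : ℝ) (hp : 0 < p) (hσ : d * (1 / 2 + 1 / p) < σ) (hδ : 0 < δ) (x : M) :
    (∫⁻ y, (Dker μ δ σ x y) ^ p ∂μ) ^ (1 / p)
      ≤ ENNReal.ofReal
          (((2 : ℝ) ^ (d * p / 2) / ((2 : ℝ) ^ (-d) - (2 : ℝ) ^ (-(σ - d / 2) * p))) ^ (1 / p))
          * μ (ball x δ) ^ (1 / p - 1) := by
  have hμ : IsDoublingOfExponent μ d := hdoub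
  have hτ : d < (σ - d / 2) * p := by
    have := mul_lt_mul_of_pos_right hσ hp
    field_simp at this ⊢
    linarith
  have hgap : 0 < (2 : ℝ) ^ (-d) - 2 ^ (-((σ - d / 2) * p)) :=
    sub_pos.2 (Real.rpow_lt_rpow_of_exponent_lt one_lt_two (by linarith))
  refine (ENNReal.rpow_le_rpow (hμ.lintegral_Dker_rpow_le hd.le x hδ hp.le hτ (hpos x δ hδ).ne'
    (hfin x δ hδ).ne) (by positivity)).trans_eq ?_
  rw [ENNReal.mul_rpow_of_nonneg _ _ (by positivity),
    ENNReal.ofReal_rpow_of_nonneg (by positivity) (by positivity), ← ENNReal.rpow_mul, neg_mul,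
    div_eq_mul_inv]
  congr 2
  field_simp
end

section
/- If γ > 0 and 0 ≤ A ≤ X ≤ B are real numbers with A < B, then (X^γ − A^γ)(B^γ − X^γ)/(B^γ − A^γ) ≤ max(γ,1) · X^γ · (√B − √A)/(√B + √A). -/
/-!
Write `a = √A`, `b = √B`, so that `A ^ γ = (a ^ γ) ^ 2` and `B ^ γ = (b ^ γ) ^ 2`. The identity
`w (q - p)² - (w - p²)(q² - w) = (w - p q)²` bounds the left-hand side by
`X ^ γ (b ^ γ - a ^ γ) / (b ^ γ + a ^ γ)`. With `a = b e^{-2s}` this ratio is `tanh (γ s)`, and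
`tanh (γ s) ≤ max γ 1 · tanh s` since `tanh` is increasing and concave on `[0, ∞)` with
`tanh 0 = 0`. In the variables `a ≤ b` the case `γ ≥ 1` of this comparison says that
`γ (b - a)(b ^ γ + a ^ γ) - (b ^ γ - a ^ γ)(b + a)` is antitone in `a`, and the sign of its
derivative is weighted AM-GM for `b` and `a ^ γ`.
-/

open Real

theorem sub_sq_mul_sq_sub_div_sq_sub_sq_le {w p q : ℝ} (hp : 0 ≤ p) (hpq : p < q) :
    (w - p ^ 2) * (q ^ 2 - w) / (q ^ 2 - p ^ 2) ≤ w * ((q - p) / (q + p)) := by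
  have hsq : q ^ 2 - p ^ 2 = (q - p) * (q + p) := by ring
  rw [div_le_iff₀ (by nlinarith), hsq, mul_div_assoc', div_mul_eq_mul_div, mul_div_assoc,
    mul_div_cancel_right₀ _ (by linarith : q + p ≠ 0)]
  nlinarith [sq_nonneg (w - p * q)]

theorem mul_rpow_le_mul_rpow {γ a b : ℝ} (hγ₀ : 0 < γ) (hγ₁ : γ ≤ 1) (ha : 0 ≤ a) (hab : a ≤ b) :
    a * b ^ γ ≤ b * a ^ γ := by
  rcases ha.eq_or_lt with rfl | ha
  · simp [zero_rpow hγ₀.ne']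
  have hb : 0 < b := ha.trans_le hab
  calc a * b ^ γ = a ^ (1 - γ) * a ^ γ * b ^ γ := by rw [← rpow_add ha]; simp
    _ ≤ b ^ (1 - γ) * a ^ γ * b ^ γ := by gcongr
    _ = b * a ^ γ := by rw [mul_right_comm, ← rpow_add hb]; simp

theorem mul_mul_rpow_sub_one_le {γ t b : ℝ} (hγ : 1 ≤ γ) (ht : 0 ≤ t) (hb : 0 ≤ b) :
    γ * (b * t ^ (γ - 1)) ≤ b ^ γ + (γ - 1) * t ^ γ := by
  have hγ₀ : γ ≠ 0 := by positivity
  have hmean := geom_mean_le_arith_mean2_weighted (w₁ := 1 / γ) (w₂ := (γ - 1) / γ)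
    (by positivity) (div_nonneg (by linarith) (by positivity)) (rpow_nonneg hb γ)
    (rpow_nonneg ht γ) (by field_simp; ring)
  rw [← rpow_mul hb, ← rpow_mul ht, mul_one_div_cancel hγ₀, rpow_one,
    mul_div_cancel₀ _ hγ₀] at hmean
  calc γ * (b * t ^ (γ - 1)) ≤ γ * (1 / γ * b ^ γ + (γ - 1) / γ * t ^ γ) := by gcongr
    _ = b ^ γ + (γ - 1) * t ^ γ := by field_simp

theorem rpow_sub_rpow_mul_add_le_of_one_le {γ a b : ℝ} (hγ : 1 ≤ γ) (ha : 0 ≤ a) (hab : a ≤ b) :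
    (b ^ γ - a ^ γ) * (b + a) ≤ γ * ((b - a) * (b ^ γ + a ^ γ)) := by
  set h : ℝ → ℝ := fun t ↦ γ * ((b - t) * (b ^ γ + t ^ γ)) - (b ^ γ - t ^ γ) * (b + t)
  set h' : ℝ → ℝ := fun t ↦ (γ + 1) * (γ * (b * t ^ (γ - 1)) - b ^ γ - (γ - 1) * t ^ γ)
  have hderiv : ∀ t, 0 < t → HasDerivAt h (h' t) t := by
    intro t ht
    have hpow := hasDerivAt_rpow_const (p := γ) (Or.inl ht.ne')
    refine ((((hasDerivAt_id t).const_sub b).mul (hpow.const_add _)).const_mul γ |>.sub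
      ((hpow.const_sub _).mul ((hasDerivAt_id t).const_add b))).congr_deriv ?_
    have hrpow : t ^ γ = t * t ^ (γ - 1) := by rw [← rpow_one_add' ht.le (by linarith)]; simp
    simp only [h', id]
    rw [hrpow]
    ring
  have hcont : Continuous h := by
    have := continuous_rpow_const (q := γ) (by linarith)
    fun_prop
  have hanti : AntitoneOn h (Set.Icc a b) := by
    refine antitoneOn_of_hasDerivWithinAt_nonpos (convex_Icc a b) hcont.continuousOn (f' := h')
      (fun t ht ↦ ?_) (fun t ht ↦ ?_) <;> rw [interior_Icc] at ht
    · exact (hderiv t (ha.trans_lt ht.1)).hasDerivWithinAt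
    · have hmean := mul_mul_rpow_sub_one_le hγ (ha.trans ht.1.le) (ha.trans hab)
      exact mul_nonpos_of_nonneg_of_nonpos (by linarith) (by linarith)
  have hab' := hanti ⟨le_rfl, hab⟩ ⟨hab, le_rfl⟩ hab
  simp only [h, sub_self, zero_mul, mul_zero] at hab'
  linarith

theorem rpow_sub_rpow_div_rpow_add_rpow_le {γ a b : ℝ} (hγ : 0 < γ) (ha : 0 ≤ a) (hab : a < b) :
    (b ^ γ - a ^ γ) / (b ^ γ + a ^ γ) ≤ max γ 1 * ((b - a) / (b + a)) := by
  have hb : 0 < b := ha.trans_lt hab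
  have hsum : 0 < b ^ γ + a ^ γ :=
    add_pos_of_pos_of_nonneg (rpow_pos_of_pos hb γ) (rpow_nonneg ha γ)
  rw [mul_div_assoc', div_le_div_iff₀ hsum (by linarith)]
  rcases le_total γ 1 with hγ₁ | hγ₁
  · have := mul_rpow_le_mul_rpow hγ hγ₁ ha hab.le
    rw [max_eq_right hγ₁]
    linarith
  · have := rpow_sub_rpow_mul_add_le_of_one_le hγ₁ ha hab.le
    rw [max_eq_left hγ₁]
    linarith

theorem jacobi_elementary_inequality_general (γ A X B : ℝ) (hγ : 0 < γ)
    (hA : 0 ≤ A) (hAX : A ≤ X) (hAB : A < B) :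
    (X ^ γ - A ^ γ) * (B ^ γ - X ^ γ) / (B ^ γ - A ^ γ)
      ≤ max γ 1 * X ^ γ * ((Real.sqrt B - Real.sqrt A) / (Real.sqrt B + Real.sqrt A)) := by
  have hsq : ∀ {Y : ℝ}, 0 ≤ Y → Y ^ γ = (√Y ^ γ) ^ 2 := fun hY ↦ by
    rw [rpow_pow_comm (sqrt_nonneg _), sq_sqrt hY]
  have hsqrt : √A < √B := sqrt_lt_sqrt hA hAB
  calc (X ^ γ - A ^ γ) * (B ^ γ - X ^ γ) / (B ^ γ - A ^ γ)
      = (X ^ γ - (√A ^ γ) ^ 2) * ((√B ^ γ) ^ 2 - X ^ γ) / ((√B ^ γ) ^ 2 - (√A ^ γ) ^ 2) := by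
        rw [← hsq hA, ← hsq (hA.trans hAB.le)]
    _ ≤ X ^ γ * ((√B ^ γ - √A ^ γ) / (√B ^ γ + √A ^ γ)) :=
        sub_sq_mul_sq_sub_div_sq_sub_sq_le (rpow_nonneg (sqrt_nonneg A) γ)
          (rpow_lt_rpow (sqrt_nonneg A) hsqrt hγ)
    _ ≤ X ^ γ * (max γ 1 * ((√B - √A) / (√B + √A))) := by
        gcongr
        · exact rpow_nonneg (hA.trans hAX) γ
        · exact rpow_sub_rpow_div_rpow_add_rpow_le hγ (sqrt_nonneg A) hsqrt
    _ = max γ 1 * X ^ γ * ((√B - √A) / (√B + √A)) := by ring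

theorem jacobi_elementary_inequality (γ A X B : ℝ) (hγ : 0 < γ)
    (hA : 0 ≤ A) (hAX : A ≤ X) (hXB : X ≤ B) (hAB : A < B) :
    (X ^ γ - A ^ γ) * (B ^ γ - X ^ γ) / (B ^ γ - A ^ γ)
      ≤ max γ 1 * X ^ γ * ((Real.sqrt B - Real.sqrt A) / (Real.sqrt B + Real.sqrt A)) :=
  jacobi_elementary_inequality_general γ A X B hγ hA hAX hAB
end

section
/- For α, β > −1 and the Jacobi weight w(x) = (1−x)^α (1+x)^β on [−1,1], the ball volumes with respect to the metric ρ(x,y) = |arccos x − arccos y| and measure dμ = w dx satisfy: there exist constants c₁, c₂ > 0 depending only on α, β such that for all x ∈ [−1,1] and 0 < r ≤ π, c₁ μ(B(x,r)) ≤ r (1−x+r²)^{α+1/2} (1+x+r²)^{β+1/2} ≤ c₂ μ(B(x,r)). In particular μ is a doubling measure on ([−1,1], ρ). -/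
/-!
With `θ = arccos x`, the substitution `y = cos φ` turns `μ(B(x, r))` into the integral over the
arc `(0, π) ∩ (θ - r, θ + r)` of
`sin φ (1 - cos φ)^α (1 + cos φ)^β = (1 - cos φ)^(α+1/2) (1 + cos φ)^(β+1/2) ≍ φ^γ (π - φ)^δ`,
`γ = 2α + 1`, `δ = 2β + 1`. For `γ, δ > -1` this integral is `≍ r (θ + r)^γ (π - θ + r)^δ`: on
each half of `[0, π]` one factor is essentially constant and the other is integrated explicitly,
and an interval of length `r / 4` in the arc gives the lower bound. Finally
`1 - x + r² ≍ (θ + r)²` and `1 + x + r² ≍ (π - θ + r)²`.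
Doubling follows from this for `r ≤ π / 2`; for larger `r` the ball `B(x, π / 2)` already has
measure bounded below uniformly in `x`, while `μ` is finite.

Each `≍` is an `Asymptotics.IsTheta` along the principal filter of the parameter set.
-/

open MeasureTheory
open scoped ENNReal NNReal

/-- The Jacobi measure `dμ = (1-x)^α (1+x)^β dx` on `[-1,1]`. -/
noncomputable def jacobiMeasure (α β : ℝ) : Measure ℝ :=
  (volume.restrict (Set.Icc (-1 : ℝ) 1)).withDensity
    fun x => ENNReal.ofReal ((1 - x) ^ α * (1 + x) ^ β)

/-- The ball of center `x` and radius `r` in `[-1,1]` for the metric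
`ρ(x,y) = |arccos x - arccos y|`. -/
def jacobiBall (x r : ℝ) : Set ℝ :=
  {y : ℝ | y ∈ Set.Icc (-1 : ℝ) 1 ∧ |Real.arccos x - Real.arccos y| < r}


open Real Set Filter Asymptotics Metric

section Comparability

variable {ι : Type*}

theorem Asymptotics.IsTheta.comp_tendsto {κ E F : Type*} [Norm E] [Norm F] {l : Filter ι}
    {l' : Filter κ} {f : ι → E} {g : ι → F} (h : f =Θ[l] g) {k : κ → ι} (hk : Tendsto k l' l) :
    (f ∘ k) =Θ[l'] (g ∘ k) :=
  ⟨h.1.comp_tendsto hk, h.2.comp_tendsto hk⟩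

theorem isTheta_principal_of_le {s : Set ι} {f g : ι → ℝ} {c C : ℝ} (hc : 0 < c)
    (hg : ∀ i ∈ s, 0 ≤ g i) (hlow : ∀ i ∈ s, c * g i ≤ f i) (hup : ∀ i ∈ s, f i ≤ C * g i) :
    f =Θ[𝓟 s] g := by
  have hf : ∀ i ∈ s, 0 ≤ f i := fun i hi => (mul_nonneg hc.le (hg i hi)).trans (hlow i hi)
  refine ⟨isBigO_principal.2 ⟨C, fun i hi => ?_⟩, isBigO_principal.2 ⟨c⁻¹, fun i hi => ?_⟩⟩
  · rw [norm_of_nonneg (hf i hi), norm_of_nonneg (hg i hi)]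
    exact hup i hi
  · rw [norm_of_nonneg (hf i hi), norm_of_nonneg (hg i hi), le_inv_mul_iff₀ hc]
    exact hlow i hi

theorem isTheta_add_two_mul_sq {s : Set ι} {f g : ι → ℝ} (hf : ∀ i ∈ s, 0 ≤ f i) :
    (fun i => f i + (2 * g i) ^ 2) =Θ[𝓟 s] fun i => f i + g i ^ 2 :=
  isTheta_principal_of_le (C := 4) one_pos (fun i hi => by nlinarith [hf i hi, sq_nonneg (g i)])
    (fun i hi => by nlinarith [sq_nonneg (g i)]) (fun i hi => by nlinarith [hf i hi])

theorem exists_pos_bounds_of_isTheta_principal {E F : Type*} [SeminormedAddCommGroup E]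
    [SeminormedAddCommGroup F] {s : Set ι} {f : ι → E} {g : ι → F}
    (h : f =Θ[𝓟 s] g) :
    ∃ c₁ c₂ : ℝ, 0 < c₁ ∧ 0 < c₂ ∧ ∀ i ∈ s, c₁ * ‖f i‖ ≤ ‖g i‖ ∧ ‖g i‖ ≤ c₂ * ‖f i‖ := by
  obtain ⟨C, hC, hfg⟩ := h.1.exists_pos
  obtain ⟨c, hc, hgf⟩ := h.2.exists_pos
  rw [isBigOWith_principal] at hfg hgf
  refine ⟨C⁻¹, c, inv_pos.2 hC, hc, fun i hi => ⟨?_, hgf i hi⟩⟩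
  rw [inv_mul_le_iff₀ hC]
  exact hfg i hi

theorem ENNReal.toReal_isTheta_of_le {l : Filter ι} {A B : ι → ℝ≥0∞} {c C : ℝ≥0}
    (hAB : ∀ᶠ i in l, A i ≤ C * B i) (hBA : ∀ᶠ i in l, B i ≤ c * A i) :
    (fun i => (A i).toReal) =Θ[l] fun i => (B i).toReal := by
  have key : ∀ {A B : ι → ℝ≥0∞} {c C : ℝ≥0}, (∀ᶠ i in l, A i ≤ C * B i) →
      (∀ᶠ i in l, B i ≤ c * A i) → (fun i => (A i).toReal) =O[l] fun i => (B i).toReal := by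
    intro A B c C hAB hBA
    refine IsBigO.of_bound C ?_
    filter_upwards [hAB, hBA] with i hAB hBA
    rw [norm_of_nonneg ENNReal.toReal_nonneg, norm_of_nonneg ENNReal.toReal_nonneg]
    by_cases hB : B i = ⊤
    · -- `B ≤ c * A` forces `A = ⊤` as well, and both sides vanish
      have hA : A i = ⊤ := by
        by_contra hA
        exact ENNReal.mul_ne_top ENNReal.coe_ne_top hA (top_le_iff.1 (hB ▸ hBA))
      simp [hA, hB]
    · calc (A i).toReal ≤ (C * B i).toReal :=
            ENNReal.toReal_mono (ENNReal.mul_ne_top ENNReal.coe_ne_top hB) hAB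
        _ = C * (B i).toReal := by simp
  exact ⟨key hAB hBA, key hBA hAB⟩

theorem Asymptotics.IsTheta.toReal_setLIntegral_ofReal {α : Type*} [MeasurableSpace α]
    {μ : Measure α} {l : Filter ι} {t : Set α} {f g : α → ℝ} (h : f =Θ[𝓟 t] g)
    (hf : ∀ x ∈ t, 0 ≤ f x) (hg : ∀ x ∈ t, 0 ≤ g x) {s : ι → Set α}
    (hs : ∀ i, MeasurableSet (s i)) (hst : ∀ i, s i ⊆ t) :
    (fun i => (∫⁻ x in s i, ENNReal.ofReal (f x) ∂μ).toReal)
      =Θ[l] fun i => (∫⁻ x in s i, ENNReal.ofReal (g x) ∂μ).toReal := by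
  have bound : ∀ {f g : α → ℝ}, f =O[𝓟 t] g → (∀ x ∈ t, 0 ≤ f x) → (∀ x ∈ t, 0 ≤ g x) →
      ∃ C : ℝ≥0, ∀ i, ∫⁻ x in s i, ENNReal.ofReal (f x) ∂μ
        ≤ C * ∫⁻ x in s i, ENNReal.ofReal (g x) ∂μ := by
    intro f g h hf hg
    obtain ⟨C, hC, hfg⟩ := h.exists_pos
    rw [isBigOWith_principal] at hfg
    refine ⟨C.toNNReal, fun i => ?_⟩
    rw [← lintegral_const_mul' _ _ ENNReal.coe_ne_top]
    refine setLIntegral_mono' (hs i) fun x hx => ?_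
    have hfgx := hfg x (hst i hx)
    rw [norm_of_nonneg (hf x (hst i hx)), norm_of_nonneg (hg x (hst i hx))] at hfgx
    change ENNReal.ofReal (f x) ≤ ENNReal.ofReal C * ENNReal.ofReal (g x)
    rw [← ENNReal.ofReal_mul hC.le]
    exact ENNReal.ofReal_le_ofReal hfgx
  obtain ⟨C, hC⟩ := bound h.1 hf hg
  obtain ⟨c, hc⟩ := bound h.2 hg hf
  exact ENNReal.toReal_isTheta_of_le (Eventually.of_forall hC) (Eventually.of_forall hc)

end Comparability

namespace Real

variable {a b c e : ℝ}

theorem rpow_le_max_one_mul_rpow (hc : 0 < c) (hb : 0 < b) (h₁ : c * b ≤ a) (h₂ : a ≤ b) :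
    a ^ e ≤ max 1 (c ^ e) * b ^ e := by
  have ha : 0 < a := (mul_pos hc hb).trans_le h₁
  rcases le_or_gt 0 e with he | he
  · calc a ^ e ≤ 1 * b ^ e := by rw [one_mul]; exact rpow_le_rpow ha.le h₂ he
      _ ≤ _ := by gcongr; exact le_max_left _ _
  · calc a ^ e ≤ (c * b) ^ e := rpow_le_rpow_of_nonpos (by positivity) h₁ he.le
      _ = c ^ e * b ^ e := mul_rpow hc.le hb.le
      _ ≤ _ := by gcongr; exact le_max_right _ _

theorem min_one_mul_rpow_le_rpow (hc : 0 < c) (hb : 0 < b) (h₁ : c * b ≤ a) (h₂ : a ≤ b) :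
    min 1 (c ^ e) * b ^ e ≤ a ^ e := by
  have ha : 0 < a := (mul_pos hc hb).trans_le h₁
  rcases le_or_gt 0 e with he | he
  · calc min 1 (c ^ e) * b ^ e ≤ c ^ e * b ^ e := by gcongr; exact min_le_right _ _
      _ = (c * b) ^ e := (mul_rpow hc.le hb.le).symm
      _ ≤ a ^ e := rpow_le_rpow (by positivity) h₁ he
  · calc min 1 (c ^ e) * b ^ e ≤ 1 * b ^ e := by gcongr; exact min_le_left _ _
      _ ≤ a ^ e := by rw [one_mul]; exact rpow_le_rpow_of_nonpos ha h₂ he.le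

theorem sq_rpow (hx : 0 ≤ a) (e : ℝ) : (a ^ 2) ^ e = a ^ (2 * e) := by
  rw [← rpow_natCast_mul hx]
  norm_num

end Real

theorem lintegral_Ioo_zero_rpow {γ b : ℝ} (hγ : -1 < γ) (hb : 0 ≤ b) :
    ∫⁻ φ in Ioo 0 b, ENNReal.ofReal (φ ^ γ) = ENNReal.ofReal (b ^ (γ + 1) / (γ + 1)) := by
  have hint : IntegrableOn (fun φ : ℝ => φ ^ γ) (Ioo 0 b) :=
    (intervalIntegral.intervalIntegrable_rpow' hγ).1.mono_set Ioo_subset_Ioc_self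
  rw [← ofReal_integral_eq_lintegral_ofReal hint
    ((ae_restrict_mem measurableSet_Ioo).mono fun φ hφ => rpow_nonneg hφ.1.le γ),
    ← integral_Ioc_eq_integral_Ioo, ← intervalIntegral.integral_of_le hb,
    integral_rpow (Or.inl hγ), zero_rpow (by linarith), sub_zero]

theorem setLIntegral_Ioi_inter_ball_rpow_le {γ : ℝ} (hγ : -1 < γ) :
    ∃ C : ℝ, 0 ≤ C ∧ ∀ θ r : ℝ, 0 ≤ θ → 0 < r →
      ∫⁻ φ in Ioi 0 ∩ ball θ r, ENNReal.ofReal (φ ^ γ)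
        ≤ ENNReal.ofReal (C * (r * (θ + r) ^ γ)) := by
  set K := max 1 ((3 : ℝ)⁻¹ ^ γ)
  have hK : 0 ≤ K := zero_le_one.trans (le_max_left _ _)
  have hγ₁ : 0 < γ + 1 := by linarith
  refine ⟨2 * K + 3 / (γ + 1), by positivity, fun θ r hθ hr => ?_⟩
  have hP : 0 < θ + r := by linarith
  have hPγ : 0 ≤ (θ + r) ^ γ := rpow_nonneg hP.le γ
  rw [Real.ball_eq_Ioo]
  rcases le_or_gt (2 * r) θ with hfar | hnear
  · -- away from the singularity at `0`, `φ` is comparable to `θ + r`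
    calc ∫⁻ φ in Ioi 0 ∩ Ioo (θ - r) (θ + r), ENNReal.ofReal (φ ^ γ)
        ≤ ∫⁻ _ in Ioi 0 ∩ Ioo (θ - r) (θ + r), ENNReal.ofReal (K * (θ + r) ^ γ) := by
          refine setLIntegral_mono measurable_const fun φ ⟨_, hφ₁, hφ₂⟩ => ?_
          exact ENNReal.ofReal_le_ofReal
            (rpow_le_max_one_mul_rpow (by norm_num) hP (by linarith) hφ₂.le)
      _ ≤ ENNReal.ofReal (K * (θ + r) ^ γ) * ENNReal.ofReal (2 * r) := by
          rw [setLIntegral_const]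
          gcongr
          calc volume (Ioi 0 ∩ Ioo (θ - r) (θ + r)) ≤ volume (Ioo (θ - r) (θ + r)) :=
                measure_mono inter_subset_right
            _ = ENNReal.ofReal (2 * r) := by rw [volume_Ioo]; ring_nf
      _ ≤ ENNReal.ofReal ((2 * K + 3 / (γ + 1)) * (r * (θ + r) ^ γ)) := by
          rw [← ENNReal.ofReal_mul (by positivity)]
          apply ENNReal.ofReal_le_ofReal
          nlinarith [mul_nonneg (div_nonneg (by norm_num : (0 : ℝ) ≤ 3) hγ₁.le)
            (mul_nonneg hr.le hPγ)]
  · calc ∫⁻ φ in Ioi 0 ∩ Ioo (θ - r) (θ + r), ENNReal.ofReal (φ ^ γ)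
        ≤ ∫⁻ φ in Ioo 0 (θ + r), ENNReal.ofReal (φ ^ γ) :=
          lintegral_mono_set fun φ hφ => ⟨hφ.1, hφ.2.2⟩
      _ = ENNReal.ofReal ((θ + r) ^ (γ + 1) / (γ + 1)) := lintegral_Ioo_zero_rpow hγ hP.le
      _ ≤ ENNReal.ofReal ((2 * K + 3 / (γ + 1)) * (r * (θ + r) ^ γ)) := by
          apply ENNReal.ofReal_le_ofReal
          rw [rpow_add_one hP.ne', div_eq_mul_inv]
          have : (θ + r) ^ γ * (θ + r) ≤ 3 * (r * (θ + r) ^ γ) := by nlinarith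
          calc (θ + r) ^ γ * (θ + r) * (γ + 1)⁻¹ ≤ 3 * (r * (θ + r) ^ γ) * (γ + 1)⁻¹ := by
                gcongr
            _ ≤ _ := by
                rw [div_eq_mul_inv]
                nlinarith [mul_nonneg hK (mul_nonneg hr.le hPγ)]

theorem setLIntegral_Ioo_inter_ball_comp_pi_sub (f : ℝ → ℝ≥0∞) (θ r : ℝ) :
    ∫⁻ φ in Ioo 0 π ∩ ball θ r, f (π - φ) = ∫⁻ ψ in Ioo 0 π ∩ ball (π - θ) r, f ψ := by
  have hpre : (fun φ => π - φ) ⁻¹' (Ioo 0 π ∩ ball (π - θ) r) = Ioo 0 π ∩ ball θ r := by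
    ext φ
    simp only [mem_preimage, mem_inter_iff, mem_Ioo, Real.ball_eq_Ioo]
    constructor <;> intro h <;> refine ⟨⟨?_, ?_⟩, ?_, ?_⟩ <;>
      linarith [h.1.1, h.1.2, h.2.1, h.2.2]
  rw [← hpre]
  exact (Measure.measurePreserving_sub_left volume π).setLIntegral_comp_preimage_emb
    (MeasurableEquiv.subLeft π).measurableEmbedding f _

theorem rpow_mul_rpow_le_add {γ δ θ r φ : ℝ} (hθ : θ ∈ Icc 0 π) (hr : 0 < r) (hrπ : r ≤ π)
    (hφ : φ ∈ Ioo 0 π ∩ ball θ r) :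
    φ ^ γ * (π - φ) ^ δ ≤ max 1 ((4 : ℝ)⁻¹ ^ δ) * (π - θ + r) ^ δ * φ ^ γ
      + max 1 ((4 : ℝ)⁻¹ ^ γ) * (θ + r) ^ γ * (π - φ) ^ δ := by
  obtain ⟨hθ₀, hθπ⟩ := hθ
  obtain ⟨⟨hφ₀, hφπ⟩, hφ⟩ := hφ
  rw [Real.ball_eq_Ioo, mem_Ioo] at hφ
  have hP : 0 < θ + r := by linarith
  have hQ : 0 < π - θ + r := by linarith
  have hφγ : 0 ≤ φ ^ γ := rpow_nonneg hφ₀.le γ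
  have hφδ : 0 ≤ (π - φ) ^ δ := rpow_nonneg (by linarith) δ
  have hKγ : 0 ≤ max 1 ((4 : ℝ)⁻¹ ^ γ) * (θ + r) ^ γ := by positivity
  have hKδ : 0 ≤ max 1 ((4 : ℝ)⁻¹ ^ δ) * (π - θ + r) ^ δ := by positivity
  rcases le_total φ (π / 2) with hφ₂ | hφ₂
  · have : (π - φ) ^ δ ≤ max 1 ((4 : ℝ)⁻¹ ^ δ) * (π - θ + r) ^ δ :=
      rpow_le_max_one_mul_rpow (by norm_num) hQ (by linarith) (by linarith)
    nlinarith [mul_nonneg hKγ hφδ]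
  · have : φ ^ γ ≤ max 1 ((4 : ℝ)⁻¹ ^ γ) * (θ + r) ^ γ :=
      rpow_le_max_one_mul_rpow (by norm_num) hP (by linarith) (by linarith)
    nlinarith [mul_nonneg hKδ hφγ]

theorem setLIntegral_rpow_mul_rpow_le {γ δ : ℝ} (hγ : -1 < γ) (hδ : -1 < δ) :
    ∃ C : ℝ, ∀ θ ∈ Icc 0 π, ∀ r : ℝ, 0 < r → r ≤ π →
      ∫⁻ φ in Ioo 0 π ∩ ball θ r, ENNReal.ofReal (φ ^ γ * (π - φ) ^ δ)
        ≤ ENNReal.ofReal (C * (r * (θ + r) ^ γ * (π - θ + r) ^ δ)) := by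
  obtain ⟨C₁, hC₁, h₁⟩ := setLIntegral_Ioi_inter_ball_rpow_le hγ
  obtain ⟨C₂, hC₂, h₂⟩ := setLIntegral_Ioi_inter_ball_rpow_le hδ
  set Kγ := max 1 ((4 : ℝ)⁻¹ ^ γ)
  set Kδ := max 1 ((4 : ℝ)⁻¹ ^ δ)
  have hKγ : 0 ≤ Kγ := zero_le_one.trans (le_max_left _ _)
  have hKδ : 0 ≤ Kδ := zero_le_one.trans (le_max_left _ _)
  refine ⟨Kδ * C₁ + Kγ * C₂, fun θ hθ r hr hrπ => ?_⟩
  have hPγ : 0 ≤ (θ + r) ^ γ := rpow_nonneg (by linarith [hθ.1]) γ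
  have hQδ : 0 ≤ (π - θ + r) ^ δ := rpow_nonneg (by linarith [hθ.2]) δ
  calc ∫⁻ φ in Ioo 0 π ∩ ball θ r, ENNReal.ofReal (φ ^ γ * (π - φ) ^ δ)
      ≤ ∫⁻ φ in Ioo 0 π ∩ ball θ r,
          (ENNReal.ofReal (Kδ * (π - θ + r) ^ δ) * ENNReal.ofReal (φ ^ γ)
            + ENNReal.ofReal (Kγ * (θ + r) ^ γ) * ENNReal.ofReal ((π - φ) ^ δ)) := by
        refine setLIntegral_mono' (measurableSet_Ioo.inter measurableSet_ball) fun φ hφ => ?_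
        have hφγ : 0 ≤ φ ^ γ := rpow_nonneg hφ.1.1.le γ
        have hφδ : 0 ≤ (π - φ) ^ δ := rpow_nonneg (by linarith [hφ.1.2]) δ
        rw [← ENNReal.ofReal_mul (by positivity), ← ENNReal.ofReal_mul (by positivity),
          ← ENNReal.ofReal_add (by positivity) (by positivity)]
        exact ENNReal.ofReal_le_ofReal (rpow_mul_rpow_le_add hθ hr hrπ hφ)
    _ = ENNReal.ofReal (Kδ * (π - θ + r) ^ δ)
          * (∫⁻ φ in Ioo 0 π ∩ ball θ r, ENNReal.ofReal (φ ^ γ))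
        + ENNReal.ofReal (Kγ * (θ + r) ^ γ)
          * ∫⁻ φ in Ioo 0 π ∩ ball θ r, ENNReal.ofReal ((π - φ) ^ δ) := by
        rw [lintegral_add_left (by fun_prop), lintegral_const_mul' _ _ ENNReal.ofReal_ne_top,
          lintegral_const_mul' _ _ ENNReal.ofReal_ne_top]
    _ ≤ ENNReal.ofReal (Kδ * (π - θ + r) ^ δ) * ENNReal.ofReal (C₁ * (r * (θ + r) ^ γ))
        + ENNReal.ofReal (Kγ * (θ + r) ^ γ) * ENNReal.ofReal (C₂ * (r * (π - θ + r) ^ δ)) := by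
        gcongr
        · exact (lintegral_mono_set (inter_subset_inter_left _ Ioo_subset_Ioi_self)).trans
            (h₁ θ r hθ.1 hr)
        · rw [setLIntegral_Ioo_inter_ball_comp_pi_sub (fun ψ => ENNReal.ofReal (ψ ^ δ))]
          exact (lintegral_mono_set (inter_subset_inter_left _ Ioo_subset_Ioi_self)).trans
            (h₂ (π - θ) r (by linarith [hθ.2]) hr)
    _ = ENNReal.ofReal ((Kδ * C₁ + Kγ * C₂) * (r * (θ + r) ^ γ * (π - θ + r) ^ δ)) := by
        rw [← ENNReal.ofReal_mul (by positivity), ← ENNReal.ofReal_mul (by positivity),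
          ← ENNReal.ofReal_add (by positivity) (by positivity)]
        ring_nf

theorem exists_Ioo_subset_Ioo_inter_ball {θ r : ℝ} (hθ : θ ∈ Icc 0 π) (hr : 0 < r)
    (hrπ : r ≤ π) :
    ∃ p, Ioo p (p + r / 4) ⊆ Ioo 0 π ∩ ball θ r ∧
      (θ + r) / 8 ≤ p ∧ (π - θ + r) / 8 ≤ π - (p + r / 4) := by
  obtain ⟨hθ₀, hθπ⟩ := hθ
  -- centre the interval at `θ + r / 2 - θ r / π`, which moves from `r / 2` to `π - r / 2`
  -- as `θ` runs over `[0, π]`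
  set s := θ * r / π
  have hsπ : s * π = θ * r := div_mul_cancel₀ _ pi_pos.ne'
  have hs₀ : 0 ≤ s := by positivity
  have hsr : s ≤ r := by nlinarith [pi_pos]
  have hp : (θ + r) / 8 ≤ θ + 3 * r / 8 - s := by
    nlinarith [mul_nonneg hθ₀ (by linarith : (0 : ℝ) ≤ 7 * π / 8 - 3 * r / 4),
      mul_nonneg (by linarith : (0 : ℝ) ≤ π - θ) hr.le, pi_pos]
  have hq : (π - θ + r) / 8 ≤ π - (θ + 3 * r / 8 - s + r / 4) := by
    nlinarith [mul_nonneg (by linarith : (0 : ℝ) ≤ π - θ)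
      (by linarith : (0 : ℝ) ≤ 7 * π / 8 - 3 * r / 4), mul_nonneg hθ₀ hr.le, pi_pos]
  refine ⟨θ + 3 * r / 8 - s, fun φ hφ => ?_, hp, hq⟩
  rw [Real.ball_eq_Ioo]
  exact ⟨⟨by linarith [hφ.1], by linarith [hφ.2]⟩, by linarith [hφ.1], by linarith [hφ.2]⟩

theorem le_setLIntegral_rpow_mul_rpow (γ δ : ℝ) :
    ∃ c : ℝ, 0 < c ∧ ∀ θ ∈ Icc 0 π, ∀ r : ℝ, 0 < r → r ≤ π →
      ENNReal.ofReal (c * (r * (θ + r) ^ γ * (π - θ + r) ^ δ))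
        ≤ ∫⁻ φ in Ioo 0 π ∩ ball θ r, ENNReal.ofReal (φ ^ γ * (π - φ) ^ δ) := by
  set kγ := min 1 ((8 : ℝ)⁻¹ ^ γ)
  set kδ := min 1 ((8 : ℝ)⁻¹ ^ δ)
  have hkγ : 0 < kγ := lt_min one_pos (by positivity)
  have hkδ : 0 < kδ := lt_min one_pos (by positivity)
  refine ⟨kγ * kδ / 4, by positivity, fun θ hθ r hr hrπ => ?_⟩
  have hP : 0 < θ + r := by linarith [hθ.1]
  have hQ : 0 < π - θ + r := by linarith [hθ.2]
  obtain ⟨p, hsub, hp, hq⟩ := exists_Ioo_subset_Ioo_inter_ball hθ hr hrπ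
  calc ENNReal.ofReal (kγ * kδ / 4 * (r * (θ + r) ^ γ * (π - θ + r) ^ δ))
      = ∫⁻ _ in Ioo p (p + r / 4), ENNReal.ofReal (kγ * (θ + r) ^ γ * (kδ * (π - θ + r) ^ δ)) := by
        rw [setLIntegral_const, volume_Ioo, ← ENNReal.ofReal_mul (by positivity)]
        ring_nf
    _ ≤ ∫⁻ φ in Ioo p (p + r / 4), ENNReal.ofReal (φ ^ γ * (π - φ) ^ δ) := by
        refine setLIntegral_mono' measurableSet_Ioo fun φ hφ => ENNReal.ofReal_le_ofReal ?_
        have hφ' := hsub hφ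
        rw [Real.ball_eq_Ioo] at hφ'
        exact mul_le_mul
          (min_one_mul_rpow_le_rpow (by norm_num) hP (by linarith [hφ.1]) hφ'.2.2.le)
          (min_one_mul_rpow_le_rpow (by norm_num) hQ (by linarith [hφ.2]) (by linarith [hφ'.2.1]))
          (by positivity) (rpow_nonneg hφ'.1.1.le γ)
    _ ≤ ∫⁻ φ in Ioo 0 π ∩ ball θ r, ENNReal.ofReal (φ ^ γ * (π - φ) ^ δ) :=
        lintegral_mono_set hsub

theorem toReal_setLIntegral_rpow_mul_rpow_isTheta {γ δ : ℝ} (hγ : -1 < γ) (hδ : -1 < δ) :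
    (fun p : ℝ × ℝ =>
        (∫⁻ φ in Ioo 0 π ∩ ball p.1 p.2, ENNReal.ofReal (φ ^ γ * (π - φ) ^ δ)).toReal)
      =Θ[𝓟 (Icc 0 π ×ˢ Ioc 0 π)] fun p => p.2 * (p.1 + p.2) ^ γ * (π - p.1 + p.2) ^ δ := by
  obtain ⟨C, hC⟩ := setLIntegral_rpow_mul_rpow_le hγ hδ
  obtain ⟨c, hc, hc'⟩ := le_setLIntegral_rpow_mul_rpow γ δ
  have hW : ∀ p ∈ Icc 0 π ×ˢ Ioc 0 π, 0 ≤ p.2 * (p.1 + p.2) ^ γ * (π - p.1 + p.2) ^ δ :=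
    fun p ⟨⟨hθ₀, hθπ⟩, hr, _⟩ => by
      have : 0 ≤ π - p.1 + p.2 := by linarith
      positivity
  refine (ENNReal.toReal_isTheta_of_le (C := C.toNNReal) (c := c⁻¹.toNNReal)
    (B := fun p => ENNReal.ofReal (p.2 * (p.1 + p.2) ^ γ * (π - p.1 + p.2) ^ δ))
    (eventually_principal.2 fun p hp => ?_) (eventually_principal.2 fun p hp => ?_))
    |>.trans_eventuallyEq (eventuallyEq_principal.2 fun p hp => ENNReal.toReal_ofReal (hW p hp))
  · exact (hC p.1 hp.1 p.2 hp.2.1 hp.2.2).trans_eq (ENNReal.ofReal_mul' (hW p hp))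
  · calc ENNReal.ofReal (p.2 * (p.1 + p.2) ^ γ * (π - p.1 + p.2) ^ δ)
        = ENNReal.ofReal c⁻¹
          * ENNReal.ofReal (c * (p.2 * (p.1 + p.2) ^ γ * (π - p.1 + p.2) ^ δ)) := by
          rw [← ENNReal.ofReal_mul (inv_nonneg.2 hc.le), inv_mul_cancel_left₀ hc.ne']
      _ ≤ _ := mul_le_mul_right (hc' p.1 hp.1 p.2 hp.2.1 hp.2.2) _

theorem one_sub_cos_isTheta_sq : (fun x => 1 - cos x) =Θ[𝓟 (Icc (-π) π)] fun x => x ^ 2 :=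
  isTheta_principal_of_le (c := 2 / π ^ 2) (C := 1 / 2) (by positivity)
    (fun x _ => sq_nonneg x)
    (fun x hx => by linarith [cos_le_one_sub_mul_cos_sq (abs_le.2 hx)])
    (fun x _ => by linarith [one_sub_sq_div_two_le_cos (x := x)])

theorem sin_mul_rpow_mul_rpow_eq {α β φ : ℝ} (h₀ : 0 < φ) (hπ : φ < π) :
    sin φ * ((1 - cos φ) ^ α * (1 + cos φ) ^ β)
      = (1 - cos φ) ^ (α + 1 / 2) * (1 + cos φ) ^ (β + 1 / 2) := by
  have h₁ : 0 < 1 - cos φ := by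
    linarith [cos_lt_cos_of_nonneg_of_le_pi le_rfl hπ.le h₀, cos_zero]
  have h₂ : 0 < 1 + cos φ := by
    linarith [cos_lt_cos_of_nonneg_of_le_pi h₀.le le_rfl hπ, cos_pi]
  have hsin : sin φ = (1 - cos φ) ^ (1 / 2 : ℝ) * (1 + cos φ) ^ (1 / 2 : ℝ) := by
    rw [sin_eq_sqrt_one_sub_cos_sq h₀.le hπ.le, ← mul_rpow h₁.le h₂.le, ← sqrt_eq_rpow]
    ring_nf
  rw [hsin, rpow_add h₁, rpow_add h₂]
  ring

theorem jacobiDensity_isTheta (α β : ℝ) :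
    (fun φ => sin φ * ((1 - cos φ) ^ α * (1 + cos φ) ^ β))
      =Θ[𝓟 (Ioo 0 π)] fun φ => φ ^ (2 * (α + 1 / 2)) * (π - φ) ^ (2 * (β + 1 / 2)) := by
  have hIoo : Ioo 0 π ⊆ Icc (-π) π := fun φ hφ => ⟨by linarith [hφ.1, pi_pos], hφ.2.le⟩
  have h₁ : (fun φ => 1 - cos φ) =Θ[𝓟 (Ioo 0 π)] fun φ => φ ^ 2 :=
    one_sub_cos_isTheta_sq.mono (principal_mono.2 hIoo)
  have h₂ : (fun φ => 1 + cos φ) =Θ[𝓟 (Ioo 0 π)] fun φ => (π - φ) ^ 2 := by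
    have hk : Tendsto (fun φ => π - φ) (𝓟 (Ioo 0 π)) (𝓟 (Icc (-π) π)) :=
      tendsto_principal_principal.2 fun φ hφ => hIoo ⟨by linarith [hφ.2], by linarith [hφ.1]⟩
    simpa [Function.comp_def, cos_pi_sub] using one_sub_cos_isTheta_sq.comp_tendsto hk
  have hnonneg : ∀ f : ℝ → ℝ, (∀ φ ∈ Ioo 0 π, 0 ≤ f φ) → 0 ≤ᶠ[𝓟 (Ioo 0 π)] f :=
    fun f hf => eventually_principal.2 hf
  refine (eventuallyEq_principal.2 fun φ hφ => sin_mul_rpow_mul_rpow_eq hφ.1 hφ.2).isTheta.trans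
    (((h₁.rpow ?_ ?_).mul (h₂.rpow ?_ ?_)).trans_eventuallyEq
      (eventuallyEq_principal.2 fun φ hφ => ?_))
  · exact hnonneg _ fun φ _ => by linarith [cos_le_one φ]
  · exact hnonneg _ fun φ _ => sq_nonneg φ
  · exact hnonneg _ fun φ _ => by linarith [neg_one_le_cos φ]
  · exact hnonneg _ fun φ _ => sq_nonneg (π - φ)
  · rw [sq_rpow hφ.1.le, sq_rpow (by linarith [hφ.2])]

theorem one_sub_cos_add_sq_isTheta :
    (fun p : ℝ × ℝ => 1 - cos p.1 + p.2 ^ 2)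
      =Θ[𝓟 (Icc 0 π ×ˢ Ioc 0 π)] fun p => (p.1 + p.2) ^ 2 := by
  refine isTheta_principal_of_le (c := 1 / π ^ 2) (C := 1) (by positivity)
    (fun p _ => sq_nonneg _) (fun p ⟨⟨hθ₀, hθπ⟩, hr⟩ => ?_) (fun p ⟨⟨hθ₀, _⟩, hr, _⟩ => ?_)
  · have hcos := cos_le_one_sub_mul_cos_sq (abs_le.2 ⟨by linarith [pi_pos], hθπ⟩)
    have hπ : 2 / π ^ 2 ≤ 1 := by
      rw [div_le_one (by positivity)]
      nlinarith [pi_gt_three]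
    calc 1 / π ^ 2 * (p.1 + p.2) ^ 2 ≤ 1 / π ^ 2 * (2 * p.1 ^ 2 + 2 * p.2 ^ 2) := by
          gcongr
          nlinarith [sq_nonneg (p.1 - p.2)]
      _ = 2 / π ^ 2 * p.1 ^ 2 + 2 / π ^ 2 * p.2 ^ 2 := by ring
      _ ≤ 1 - cos p.1 + p.2 ^ 2 := by nlinarith [sq_nonneg p.2]
  · nlinarith [one_sub_sq_div_two_le_cos (x := p.1), mul_nonneg hθ₀ hr.le]

theorem one_add_cos_add_sq_isTheta :
    (fun p : ℝ × ℝ => 1 + cos p.1 + p.2 ^ 2)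
      =Θ[𝓟 (Icc 0 π ×ˢ Ioc 0 π)] fun p => (π - p.1 + p.2) ^ 2 := by
  have hk : Tendsto (fun p : ℝ × ℝ => (π - p.1, p.2)) (𝓟 (Icc 0 π ×ˢ Ioc 0 π))
      (𝓟 (Icc 0 π ×ˢ Ioc 0 π)) :=
    tendsto_principal_principal.2 fun p ⟨⟨hθ₀, hθπ⟩, hr⟩ =>
      ⟨⟨by linarith, by linarith⟩, hr⟩
  simpa [Function.comp_def, cos_pi_sub] using one_sub_cos_add_sq_isTheta.comp_tendsto hk

noncomputable def jacobiBallSize (α β x r : ℝ) : ℝ :=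
  r * (1 - x + r ^ 2) ^ (α + 1 / 2) * (1 + x + r ^ 2) ^ (β + 1 / 2)

theorem jacobiBallSize_cos_isTheta (α β : ℝ) :
    (fun p : ℝ × ℝ => jacobiBallSize α β (cos p.1) p.2)
      =Θ[𝓟 (Icc 0 π ×ˢ Ioc 0 π)]
        fun p => p.2 * (p.1 + p.2) ^ (2 * (α + 1 / 2)) * (π - p.1 + p.2) ^ (2 * (β + 1 / 2)) := by
  have h₁ : 0 ≤ᶠ[𝓟 (Icc 0 π ×ˢ Ioc 0 π)] fun p : ℝ × ℝ => 1 - cos p.1 + p.2 ^ 2 :=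
    Eventually.of_forall fun p => show 0 ≤ 1 - cos p.1 + p.2 ^ 2 by
      nlinarith [cos_le_one p.1, sq_nonneg p.2]
  have h₂ : 0 ≤ᶠ[𝓟 (Icc 0 π ×ˢ Ioc 0 π)] fun p : ℝ × ℝ => 1 + cos p.1 + p.2 ^ 2 :=
    Eventually.of_forall fun p => show 0 ≤ 1 + cos p.1 + p.2 ^ 2 by
      nlinarith [neg_one_le_cos p.1, sq_nonneg p.2]
  refine ((isTheta_rfl.mul (one_sub_cos_add_sq_isTheta.rpow h₁ (Eventually.of_forall
    fun p => sq_nonneg _))).mul (one_add_cos_add_sq_isTheta.rpow h₂ (Eventually.of_forall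
    fun p => sq_nonneg _))).trans_eventuallyEq (eventuallyEq_principal.2 fun p hp => ?_)
  have hP : 0 ≤ p.1 + p.2 := by linarith [hp.1.1, hp.2.1]
  have hQ : 0 ≤ π - p.1 + p.2 := by linarith [hp.1.2, hp.2.1]
  simp only [sq_rpow hP, sq_rpow hQ]

theorem jacobiBall_eq_image_cos (x r : ℝ) :
    jacobiBall x r = cos '' (Icc 0 π ∩ ball (arccos x) r) := by
  ext y
  constructor
  · rintro ⟨⟨hy₁, hy₂⟩, hxy⟩
    refine ⟨arccos y, ⟨⟨arccos_nonneg y, arccos_le_pi y⟩, ?_⟩, cos_arccos hy₁ hy₂⟩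
    rwa [mem_ball, dist_eq, abs_sub_comm]
  · rintro ⟨φ, ⟨⟨hφ₀, hφπ⟩, hφ⟩, rfl⟩
    refine ⟨⟨neg_one_le_cos φ, cos_le_one φ⟩, ?_⟩
    rwa [arccos_cos hφ₀ hφπ, abs_sub_comm, ← dist_eq]

theorem jacobiMeasure_image_cos (α β : ℝ) {s : Set ℝ} (hs : MeasurableSet s)
    (hsπ : s ⊆ Icc 0 π) :
    jacobiMeasure α β (cos '' s)
      = ∫⁻ φ in s, ENNReal.ofReal (sin φ * ((1 - cos φ) ^ α * (1 + cos φ) ^ β)) := by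
  have hcos : cos '' s ⊆ Icc (-1) 1 := by
    rintro _ ⟨φ, -, rfl⟩
    exact ⟨neg_one_le_cos φ, cos_le_one φ⟩
  rw [jacobiMeasure, withDensity_apply', Measure.restrict_restrict_of_subset hcos,
    lintegral_image_eq_lintegral_abs_deriv_mul hs
      (fun φ _ => (hasDerivAt_cos φ).hasDerivWithinAt) (injOn_cos.mono hsπ)]
  refine setLIntegral_congr_fun hs fun φ hφ => ?_
  have hsin : 0 ≤ sin φ := sin_nonneg_of_nonneg_of_le_pi (hsπ hφ).1 (hsπ hφ).2
  rw [abs_neg, abs_of_nonneg hsin, ← ENNReal.ofReal_mul hsin]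

theorem jacobiMeasure_jacobiBall (α β x r : ℝ) :
    jacobiMeasure α β (jacobiBall x r)
      = ∫⁻ φ in Ioo 0 π ∩ ball (arccos x) r,
          ENNReal.ofReal (sin φ * ((1 - cos φ) ^ α * (1 + cos φ) ^ β)) := by
  rw [jacobiBall_eq_image_cos, jacobiMeasure_image_cos α β
    (measurableSet_Icc.inter measurableSet_ball) inter_subset_left]
  exact setLIntegral_congr (Ioo_ae_eq_Icc.inter ae_eq_rfl).symm

theorem toReal_setLIntegral_jacobiDensity_isTheta {α β : ℝ} (hα : -1 < α) (hβ : -1 < β) :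
    (fun p : ℝ × ℝ => (∫⁻ φ in Ioo 0 π ∩ ball p.1 p.2,
        ENNReal.ofReal (sin φ * ((1 - cos φ) ^ α * (1 + cos φ) ^ β))).toReal)
      =Θ[𝓟 (Icc 0 π ×ˢ Ioc 0 π)] fun p => jacobiBallSize α β (cos p.1) p.2 :=
  ((jacobiDensity_isTheta α β).toReal_setLIntegral_ofReal
      (fun φ hφ => by
        have : 0 ≤ sin φ := sin_nonneg_of_nonneg_of_le_pi hφ.1.le hφ.2.le
        have : 0 ≤ 1 - cos φ := by linarith [cos_le_one φ]
        have : 0 ≤ 1 + cos φ := by linarith [neg_one_le_cos φ]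
        positivity)
      (fun φ hφ => by
        have : 0 ≤ π - φ := by linarith [hφ.2]
        have := hφ.1.le
        positivity)
      (fun _ => measurableSet_Ioo.inter measurableSet_ball) fun _ => inter_subset_left).trans
    ((toReal_setLIntegral_rpow_mul_rpow_isTheta (by linarith) (by linarith)).trans
      (jacobiBallSize_cos_isTheta α β).symm)

theorem jacobiMeasure_jacobiBall_isTheta {α β : ℝ} (hα : -1 < α) (hβ : -1 < β) :
    (fun p : ℝ × ℝ => (jacobiMeasure α β (jacobiBall p.1 p.2)).toReal)
      =Θ[𝓟 (Icc (-1) 1 ×ˢ Ioc 0 π)] fun p => jacobiBallSize α β p.1 p.2 := by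
  have hk : Tendsto (fun p : ℝ × ℝ => (arccos p.1, p.2)) (𝓟 (Icc (-1) 1 ×ˢ Ioc 0 π))
      (𝓟 (Icc 0 π ×ˢ Ioc 0 π)) :=
    tendsto_principal_principal.2 fun p hp => ⟨⟨arccos_nonneg _, arccos_le_pi _⟩, hp.2⟩
  simp_rw [jacobiMeasure_jacobiBall]
  exact ((toReal_setLIntegral_jacobiDensity_isTheta hα hβ).comp_tendsto hk).trans_eventuallyEq
    (eventuallyEq_principal.2 fun p hp => by simp [cos_arccos hp.1.1 hp.1.2])

theorem jacobiBall_zero_pi : jacobiBall 0 π = Icc (-1) 1 := by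
  ext y
  refine ⟨fun hy => hy.1, fun hy => ⟨hy, ?_⟩⟩
  rw [arccos_zero, abs_lt]
  constructor <;> linarith [arccos_nonneg y, arccos_le_pi y, pi_pos]

theorem isFiniteMeasure_jacobiMeasure {α β : ℝ} (hα : -1 < α) (hβ : -1 < β) :
    IsFiniteMeasure (jacobiMeasure α β) := by
  have hpos : jacobiBallSize α β 0 π ≠ 0 := by
    unfold jacobiBallSize
    have := pi_pos
    positivity
  have hIcc : (jacobiMeasure α β (Icc (-1) 1)).toReal ≠ 0 := by
    have := eventually_principal.1 (jacobiMeasure_jacobiBall_isTheta hα hβ).eq_zero_iff (0, π)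
      ⟨⟨by norm_num, by norm_num⟩, pi_pos, le_rfl⟩
    rwa [← jacobiBall_zero_pi, Ne, this]
  refine ⟨?_⟩
  have huniv : jacobiMeasure α β univ = jacobiMeasure α β (Icc (-1) 1) := by
    simp only [jacobiMeasure, withDensity_apply', Measure.restrict_univ,
      Measure.restrict_restrict_of_subset subset_rfl]
  rw [huniv, lt_top_iff_ne_top]
  exact fun h => hIcc (by simp [h])

theorem jacobiBallSize_two_mul_isTheta (α β : ℝ) :
    (fun p : ℝ × ℝ => jacobiBallSize α β p.1 (2 * p.2))
      =Θ[𝓟 (Icc (-1) 1 ×ˢ Ioi 0)] fun p => jacobiBallSize α β p.1 p.2 := by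
  set S : Set (ℝ × ℝ) := Icc (-1) 1 ×ˢ Ioi 0
  have h₁ : ∀ p ∈ S, 0 ≤ 1 - p.1 := fun p hp => by linarith [hp.1.2]
  have h₂ : ∀ p ∈ S, 0 ≤ 1 + p.1 := fun p hp => by linarith [hp.1.1]
  have hnonneg : ∀ {f g : ℝ × ℝ → ℝ}, (∀ p ∈ S, 0 ≤ f p) → 0 ≤ᶠ[𝓟 S] fun p => f p + g p ^ 2 :=
    fun hf => eventually_principal.2 fun p hp => add_nonneg (hf p hp) (sq_nonneg _)
  exact (((isTheta_const_mul_left two_ne_zero).2 isTheta_rfl).mul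
    ((isTheta_add_two_mul_sq h₁).rpow (hnonneg h₁) (hnonneg h₁))).mul
    ((isTheta_add_two_mul_sq h₂).rpow (hnonneg h₂) (hnonneg h₂))

theorem jacobiMeasure_jacobiBall_two_mul_isBigO_of_le {α β : ℝ} (hα : -1 < α) (hβ : -1 < β) :
    (fun p : ℝ × ℝ => (jacobiMeasure α β (jacobiBall p.1 (2 * p.2))).toReal)
      =O[𝓟 (Icc (-1) 1 ×ˢ Ioc 0 (π / 2))]
        fun p => (jacobiMeasure α β (jacobiBall p.1 p.2)).toReal := by
  have hM := jacobiMeasure_jacobiBall_isTheta hα hβ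
  have hk : Tendsto (fun p : ℝ × ℝ => (p.1, 2 * p.2)) (𝓟 (Icc (-1) 1 ×ˢ Ioc 0 (π / 2)))
      (𝓟 (Icc (-1) 1 ×ˢ Ioc 0 π)) :=
    tendsto_principal_principal.2 fun p hp => ⟨hp.1, by linarith [hp.2.1], by linarith [hp.2.2]⟩
  have hsub : Icc (-1) 1 ×ˢ Ioc 0 (π / 2) ⊆ Icc (-1 : ℝ) 1 ×ˢ Ioc 0 π :=
    prod_mono subset_rfl (Ioc_subset_Ioc_right (by linarith [pi_pos]))
  exact ((hM.comp_tendsto hk).trans (((jacobiBallSize_two_mul_isTheta α β).mono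
    (principal_mono.2 (prod_mono subset_rfl Ioc_subset_Ioi_self))).trans
    (hM.symm.mono (principal_mono.2 hsub)))).isBigO

theorem one_isBigO_jacobiMeasure_jacobiBall_pi_div_two {α β : ℝ} (hα : -1 < α) (hβ : -1 < β) :
    (fun _ => (1 : ℝ)) =O[𝓟 (Icc (-1) 1)]
      fun x => (jacobiMeasure α β (jacobiBall x (π / 2))).toReal := by
  have hk : Tendsto (fun x : ℝ => (x, π / 2)) (𝓟 (Icc (-1) 1)) (𝓟 (Icc (-1) 1 ×ˢ Ioc 0 π)) :=
    tendsto_principal_principal.2 fun x hx => ⟨hx, by linarith [pi_pos], by linarith [pi_pos]⟩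
  have hpos : ∀ x ∈ Icc (-1 : ℝ) 1, 0 < 1 - x + (π / 2) ^ 2 ∧ 0 < 1 + x + (π / 2) ^ 2 :=
    fun x hx => ⟨by nlinarith [hx.2, pi_pos], by nlinarith [hx.1, pi_pos]⟩
  have hcont : ContinuousOn (fun x => jacobiBallSize α β x (π / 2)) (Icc (-1) 1) := by
    unfold jacobiBallSize
    exact (continuousOn_const.mul ((by fun_prop : ContinuousOn (fun x : ℝ =>
      1 - x + (π / 2) ^ 2) _).rpow_const fun x hx => Or.inl (hpos x hx).1.ne')).mul
      ((by fun_prop : ContinuousOn (fun x : ℝ => 1 + x + (π / 2) ^ 2) _).rpow_const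
        fun x hx => Or.inl (hpos x hx).2.ne')
  have hconst := hcont.isTheta_principal isCompact_Icc (c := (1 : ℝ)) (by norm_num) fun x hx => by
    unfold jacobiBallSize
    have := (hpos x hx).1
    have := (hpos x hx).2
    have := pi_pos
    positivity
  exact (hconst.symm.trans ((jacobiMeasure_jacobiBall_isTheta hα hβ).comp_tendsto hk).symm).isBigO

theorem jacobiMeasure_jacobiBall_two_mul_isBigO_of_gt {α β : ℝ} (hα : -1 < α) (hβ : -1 < β) :
    (fun p : ℝ × ℝ => (jacobiMeasure α β (jacobiBall p.1 (2 * p.2))).toReal)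
      =O[𝓟 (Icc (-1) 1 ×ˢ Ioi (π / 2))]
        fun p => (jacobiMeasure α β (jacobiBall p.1 p.2)).toReal := by
  have := isFiniteMeasure_jacobiMeasure hα hβ
  have hbounded : (fun p : ℝ × ℝ => (jacobiMeasure α β (jacobiBall p.1 (2 * p.2))).toReal)
      =O[𝓟 (Icc (-1) 1 ×ˢ Ioi (π / 2))] fun _ => (1 : ℝ) :=
    IsBigO.of_bound (jacobiMeasure α β univ).toReal (Eventually.of_forall fun p => by
      rw [norm_of_nonneg ENNReal.toReal_nonneg, norm_one, mul_one]
      exact ENNReal.toReal_mono (measure_ne_top _ _) (measure_mono (subset_univ _)))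
  have hk : Tendsto Prod.fst (𝓟 (Icc (-1 : ℝ) 1 ×ˢ Ioi (π / 2))) (𝓟 (Icc (-1) 1)) :=
    tendsto_principal_principal.2 fun p hp => hp.1
  have hmono : (fun p : ℝ × ℝ => (jacobiMeasure α β (jacobiBall p.1 (π / 2))).toReal)
      =O[𝓟 (Icc (-1) 1 ×ˢ Ioi (π / 2))]
        fun p => (jacobiMeasure α β (jacobiBall p.1 p.2)).toReal :=
    IsBigO.of_bound 1 (eventually_principal.2 fun p hp => by
      rw [norm_of_nonneg ENNReal.toReal_nonneg, norm_of_nonneg ENNReal.toReal_nonneg, one_mul]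
      exact ENNReal.toReal_mono (measure_ne_top _ _)
        (measure_mono fun y hy => ⟨hy.1, hy.2.trans hp.2⟩))
  exact hbounded.trans
    (((one_isBigO_jacobiMeasure_jacobiBall_pi_div_two hα hβ).comp_tendsto hk).trans hmono)

theorem jacobiMeasure_jacobiBall_two_mul_le {α β : ℝ} (hα : -1 < α) (hβ : -1 < β) :
    ∃ C : ℝ≥0∞, C < ⊤ ∧ ∀ x ∈ Icc (-1 : ℝ) 1, ∀ r : ℝ, 0 < r →
      jacobiMeasure α β (jacobiBall x (2 * r)) ≤ C * jacobiMeasure α β (jacobiBall x r) := by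
  have := isFiniteMeasure_jacobiMeasure hα hβ
  have hsplit : Icc (-1 : ℝ) 1 ×ˢ Ioi 0
      = Icc (-1) 1 ×ˢ Ioc 0 (π / 2) ∪ Icc (-1) 1 ×ˢ Ioi (π / 2) := by
    rw [← prod_union, Ioc_union_Ioi_eq_Ioi (by positivity)]
  have hO := (jacobiMeasure_jacobiBall_two_mul_isBigO_of_le hα hβ).sup
    (jacobiMeasure_jacobiBall_two_mul_isBigO_of_gt hα hβ)
  rw [sup_principal, ← hsplit, isBigO_principal] at hO
  obtain ⟨C, hC⟩ := hO
  refine ⟨ENNReal.ofReal C, ENNReal.ofReal_lt_top, fun x hx r hr => ?_⟩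
  have h := hC (x, r) ⟨hx, hr⟩
  rw [norm_of_nonneg ENNReal.toReal_nonneg, norm_of_nonneg ENNReal.toReal_nonneg] at h
  calc jacobiMeasure α β (jacobiBall x (2 * r))
      = ENNReal.ofReal (jacobiMeasure α β (jacobiBall x (2 * r))).toReal :=
        (ENNReal.ofReal_toReal (measure_ne_top _ _)).symm
    _ ≤ ENNReal.ofReal (C * (jacobiMeasure α β (jacobiBall x r)).toReal) :=
        ENNReal.ofReal_le_ofReal h
    _ = ENNReal.ofReal C * jacobiMeasure α β (jacobiBall x r) := by
        rw [ENNReal.ofReal_mul' ENNReal.toReal_nonneg, ENNReal.ofReal_toReal (measure_ne_top _ _)]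

theorem jacobi_ball_volume (α β : ℝ) (hα : -1 < α) (hβ : -1 < β) :
    ∃ c₁ c₂ : ℝ, 0 < c₁ ∧ 0 < c₂ ∧
      (∀ x ∈ Set.Icc (-1 : ℝ) 1, ∀ r : ℝ, 0 < r → r ≤ Real.pi →
        c₁ * (jacobiMeasure α β (jacobiBall x r)).toReal
            ≤ r * (1 - x + r ^ 2) ^ (α + 1 / 2) * (1 + x + r ^ 2) ^ (β + 1 / 2) ∧
        r * (1 - x + r ^ 2) ^ (α + 1 / 2) * (1 + x + r ^ 2) ^ (β + 1 / 2)
            ≤ c₂ * (jacobiMeasure α β (jacobiBall x r)).toReal) ∧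
      ∃ C : ℝ≥0∞, C < ⊤ ∧ ∀ x ∈ Set.Icc (-1 : ℝ) 1, ∀ r : ℝ, 0 < r →
        jacobiMeasure α β (jacobiBall x (2 * r)) ≤ C * jacobiMeasure α β (jacobiBall x r) := by
  obtain ⟨c₁, c₂, hc₁, hc₂, hbounds⟩ :=
    exists_pos_bounds_of_isTheta_principal (jacobiMeasure_jacobiBall_isTheta hα hβ)
  refine ⟨c₁, c₂, hc₁, hc₂, fun x hx r hr hrπ => ?_, jacobiMeasure_jacobiBall_two_mul_le hα hβ⟩
  have hsize : 0 ≤ jacobiBallSize α β x r := by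
    have : 0 ≤ 1 - x := by linarith [hx.2]
    have : 0 ≤ 1 + x := by linarith [hx.1]
    unfold jacobiBallSize
    positivity
  have h := hbounds (x, r) ⟨hx, hr, hrπ⟩
  rwa [norm_of_nonneg ENNReal.toReal_nonneg, norm_of_nonneg hsize] at h
end
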